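/- arXiv:hep-th/9407191 — 3 statements merged into one kernel-verified Lean document; each statement's English description precedes it below -/
import Mathlib

section
/- As formal power series, ∏_{n≥1, n odd} (1+q^n) = ∑_{r≥0} q^{r²}/(q²;q²)_r, where (q²;q²)_r = ∏_{j=1}^r (1-q^{2j}). -/
open PowerSeries Finset

/-- `∏_{j=1}^m (1 - q^{a j})`, the q-Pochhammer `(q^a; q^a)_m` as a power series in `q = X`. -/
noncomputable def qpochA (a m : ℕ) : PowerSeries ℚ :=
  ∏ j ∈ Finset.range m, (1 - (PowerSeries.X : PowerSeries ℚ) ^ (a * (j + 1)))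

/-- `(q)_m = ∏_{j=1}^m (1 - q^j)`. -/
noncomputable def qpoch (m : ℕ) : PowerSeries ℚ := qpochA 1 m

/-- Gaussian binomial `[N choose M]_{q^a}`: `(q^a)_N / ((q^a)_M (q^a)_{N-M})` when
`0 ≤ M ≤ N`, and `0` otherwise. -/
noncomputable def qbinomA (a : ℕ) (N M : ℤ) : PowerSeries ℚ :=
  if 0 ≤ M ∧ M ≤ N then
    qpochA a N.toNat * (qpochA a M.toNat)⁻¹ * (qpochA a (N - M).toNat)⁻¹
  else 0

/-- Gaussian binomial `[N choose M]_q`. -/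
noncomputable def qbinom (N M : ℤ) : PowerSeries ℚ := qbinomA 1 N M

/-!
Compare both sides modulo `X ^ (d + 1)`. The finite q-binomial theorem in base `q²` with
`z = q` gives `∏_{j<d} (1 + q^(2j+1)) = ∑_{r ≤ d} q^(r²) [d, r]_{q²}`, and the factors `1 + q^n`
with `n > d` do not affect the coefficient of `q^d`. Moreover
`[d, r]_{q²} (q²;q²)_r = ∏_{j<r} (1 - q^(2(d-j))) ≡ 1 mod q^(2(d-r+1))`, and since
`r² + 2(d-r+1) > d`, replacing `[d, r]_{q²}` by `1 / (q²;q²)_r` does not change that coefficient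
either.
-/

section GaussBinom

variable {R : Type*} [CommRing R]

/-- The Gaussian binomial `[N, r]_q` via the q-Pascal rule; unlike `qbinomA`, this needs no
inverses, so it makes sense in any commutative ring. -/
noncomputable def gaussBinom (q : R) : ℕ → ℕ → R
  | _, 0 => 1
  | 0, _ + 1 => 0
  | N + 1, r + 1 => gaussBinom q N r + q ^ (r + 1) * gaussBinom q N (r + 1)

@[simp]
lemma gaussBinom_zero_right (q : R) (N : ℕ) : gaussBinom q N 0 = 1 := by
  cases N <;> rfl

lemma gaussBinom_succ_succ (q : R) (N r : ℕ) :
    gaussBinom q (N + 1) (r + 1) = gaussBinom q N r + q ^ (r + 1) * gaussBinom q N (r + 1) :=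
  rfl

lemma gaussBinom_eq_zero_of_lt (q : R) {N r : ℕ} (h : N < r) : gaussBinom q N r = 0 := by
  induction N generalizing r with
  | zero => obtain ⟨r, rfl⟩ := Nat.exists_eq_add_one_of_ne_zero h.ne'; rfl
  | succ N ih =>
    obtain ⟨r, rfl⟩ := Nat.exists_eq_add_one_of_ne_zero (Nat.ne_zero_of_lt h)
    rw [gaussBinom_succ_succ, ih (by omega), ih (by omega), mul_zero, add_zero]

theorem prod_one_add_mul_pow_eq_sum (q z : R) (N : ℕ) :
    ∏ j ∈ range N, (1 + z * q ^ j) =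
      ∑ r ∈ range (N + 1), q ^ r.choose 2 * z ^ r * gaussBinom q N r := by
  induction N generalizing z with
  | zero => simp
  | succ N ih =>
    set U : ℕ → R := fun r => q ^ r.choose 2 * (z * q) ^ r * gaussBinom q N r
    have hpascal (r : ℕ) : q ^ (r + 1).choose 2 * z ^ (r + 1) * gaussBinom q (N + 1) (r + 1) =
        z * U r + U (r + 1) := by
      simp only [U, gaussBinom_succ_succ, Nat.choose_succ_succ', Nat.choose_one_right]
      ring
    have hshift : ∑ r ∈ range (N + 1), U (r + 1) + 1 = ∑ r ∈ range (N + 1), U r := by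
      have hU0 : U 0 = 1 := by simp [U]
      rw [← hU0, ← sum_range_succ', sum_range_succ _ (N + 1)]
      simp only [U, gaussBinom_eq_zero_of_lt q N.lt_succ_self, mul_zero, add_zero]
    calc ∏ j ∈ range (N + 1), (1 + z * q ^ j)
        = (∏ j ∈ range N, (1 + z * q * q ^ j)) * (1 + z) := by
          simp only [prod_range_succ', pow_succ, pow_zero, mul_one, mul_assoc, mul_comm q]
      _ = z * ∑ r ∈ range (N + 1), U r + (∑ r ∈ range (N + 1), U (r + 1) + 1) := by
          rw [ih, hshift]; ring
      _ = _ := by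
          rw [sum_range_succ' _ (N + 1)]
          simp [hpascal, sum_add_distrib, mul_sum, add_assoc]

lemma gaussBinom_mul_prod_one_sub_pow (q : R) (N r : ℕ) :
    gaussBinom q N r * ∏ j ∈ range r, (1 - q ^ (j + 1)) = ∏ j ∈ range r, (1 - q ^ (N - j)) := by
  induction N generalizing r with
  | zero =>
    cases r with
    | zero => simp
    | succ r => simp [gaussBinom, prod_range_succ']
  | succ N ih =>
    cases r with
    | zero => simp
    | succ s =>
      calc gaussBinom q (N + 1) (s + 1) * ∏ j ∈ range (s + 1), (1 - q ^ (j + 1))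
          = (gaussBinom q N s * ∏ j ∈ range s, (1 - q ^ (j + 1))) * (1 - q ^ (s + 1)) +
              q ^ (s + 1) * (gaussBinom q N (s + 1) * ∏ j ∈ range (s + 1), (1 - q ^ (j + 1))) := by
            rw [gaussBinom_succ_succ, prod_range_succ]; ring
        _ = (∏ j ∈ range s, (1 - q ^ (N - j))) * (1 - q ^ (s + 1)) +
              q ^ (s + 1) * ((∏ j ∈ range s, (1 - q ^ (N - j))) * (1 - q ^ (N - s))) := by
            rw [ih, ih, prod_range_succ]
        _ = (∏ j ∈ range s, (1 - q ^ (N - j))) * (1 - q ^ (N + 1)) := by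
            rcases le_or_gt s N with h | h
            · rw [show N + 1 = s + 1 + (N - s) by omega, pow_add]; ring
            · rw [prod_eq_zero (mem_range.2 h) (by simp)]; ring
        _ = ∏ j ∈ range (s + 1), (1 - q ^ (N + 1 - j)) := by
            simp [prod_range_succ']

end GaussBinom

lemma dvd_prod_sub_one {R ι : Type*} [CommRing R] {a : R} {s : Finset ι} {f : ι → R}
    (h : ∀ i ∈ s, a ∣ f i - 1) : a ∣ ∏ i ∈ s, f i - 1 := by
  simp only [← Ideal.mem_span_singleton, ← Ideal.Quotient.eq, map_prod, map_one] at h ⊢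
  exact prod_eq_one h

lemma dvd_prod_sub_prod_of_subset {R ι : Type*} [CommRing R] [DecidableEq ι] {a : R}
    {s t : Finset ι} {f : ι → R} (hst : s ⊆ t) (h : ∀ i ∈ t \ s, a ∣ f i - 1) :
    a ∣ ∏ i ∈ t, f i - ∏ i ∈ s, f i := by
  rw [← prod_sdiff hst, ← sub_one_mul]
  exact (dvd_prod_sub_one h).mul_right _

lemma PowerSeries.coeff_eq_of_X_pow_dvd_sub {R : Type*} [CommRing R] {d : ℕ} {f g : R⟦X⟧}
    (h : X ^ (d + 1) ∣ f - g) : coeff d f = coeff d g := by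
  rw [← sub_eq_zero, ← map_sub]
  exact X_pow_dvd_iff.mp h d d.lt_succ_self

lemma constantCoeff_qpochA {a : ℕ} (ha : 0 < a) (r : ℕ) : constantCoeff (qpochA a r) = 1 := by
  simp [qpochA, map_prod, ha.ne']

lemma X_pow_dvd_gaussBinom_sub_inv_qpochA {a N r : ℕ} (ha : 0 < a) (hr : r ≤ N) :
    (X : ℚ⟦X⟧) ^ (a * (N - r + 1)) ∣ gaussBinom (X ^ a) N r - (qpochA a r)⁻¹ := by
  have hunit : constantCoeff (qpochA a r) ≠ 0 := by simp [constantCoeff_qpochA ha]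
  have hB : gaussBinom (X ^ a) N r =
      (∏ j ∈ range r, (1 - (X : ℚ⟦X⟧) ^ (a * (N - j)))) * (qpochA a r)⁻¹ := by
    rw [eq_mul_inv_iff_mul_eq hunit, qpochA]
    simpa only [pow_mul] using gaussBinom_mul_prod_one_sub_pow (X ^ a : ℚ⟦X⟧) N r
  rw [hB, ← sub_one_mul]
  refine (dvd_prod_sub_one fun j hj => ?_).mul_right _
  rw [sub_sub_cancel_left, dvd_neg]
  exact pow_dvd_pow _ (Nat.mul_le_mul_left _ (by grind))

lemma two_mul_choose_two_add_self (r : ℕ) : 2 * r.choose 2 + r = r ^ 2 := by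
  induction r with
  | zero => rfl
  | succ r ih => rw [Nat.choose_succ_succ', Nat.choose_one_right]; linear_combination ih

lemma prod_one_add_X_pow_odd_eq_sum (N : ℕ) :
    ∏ j ∈ range N, (1 + (X : ℚ⟦X⟧) ^ (2 * j + 1)) =
      ∑ r ∈ range (N + 1), X ^ (r ^ 2) * gaussBinom (X ^ 2) N r := by
  convert prod_one_add_mul_pow_eq_sum (X ^ 2 : ℚ⟦X⟧) X N using 2 with j _ r _
  · ring
  · rw [← pow_mul, ← pow_add, two_mul_choose_two_add_self]

lemma coeff_prod_odd_eq_coeff_prod_range {R : Type*} [CommRing R] (d : ℕ) :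
    coeff d (∏ n ∈ (range (d + 1)).filter Odd, (1 + (X : R⟦X⟧) ^ n)) =
      coeff d (∏ j ∈ range d, (1 + (X : R⟦X⟧) ^ (2 * j + 1))) := by
  rw [← prod_image (g := fun j => 2 * j + 1) (f := fun n => 1 + (X : R⟦X⟧) ^ n)
    fun _ _ _ _ h => by simpa using h]
  refine (coeff_eq_of_X_pow_dvd_sub (dvd_prod_sub_prod_of_subset ?_ fun n hn => ?_)).symm
  · intro n hn
    simp only [mem_filter, mem_range, mem_image] at hn ⊢
    obtain ⟨hnd, k, rfl⟩ := hn
    exact ⟨k, by omega, rfl⟩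
  · simp only [mem_sdiff, mem_filter, mem_range, mem_image] at hn
    rw [add_sub_cancel_left]
    exact pow_dvd_pow _ (by grind)

lemma coeff_X_pow_sq_mul_gaussBinom {d r : ℕ} (hrd : r ≤ d) :
    coeff d ((X : ℚ⟦X⟧) ^ (r ^ 2) * gaussBinom (X ^ 2) d r) =
      coeff d ((X : ℚ⟦X⟧) ^ (r ^ 2) * (qpochA 2 r)⁻¹) := by
  have hexp : d + 1 ≤ r ^ 2 + 2 * (d - r + 1) := by
    have := Nat.sub_add_cancel hrd
    nlinarith
  refine coeff_eq_of_X_pow_dvd_sub ((pow_dvd_pow X hexp).trans ?_)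
  rw [← mul_sub, pow_add]
  exact mul_dvd_mul_left _ (X_pow_dvd_gaussBinom_sub_inv_qpochA two_pos hrd)

/-- Euler's identity (j = 0 case), coefficientwise:
`∏_{n ≥ 1 odd} (1+q^n) = ∑_{r≥0} q^{r²}/(q²;q²)_r`.
Factors with `n > d` and terms with `r > d` do not affect the coefficient of `q^d`. -/
theorem euler_odd (d : ℕ) :
    (PowerSeries.coeff (R := ℚ) d)
        (∏ n ∈ (Finset.range (d + 1)).filter (fun n => Odd n),
          (1 + (PowerSeries.X : PowerSeries ℚ) ^ n)) =
      (PowerSeries.coeff (R := ℚ) d)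
        (∑ r ∈ Finset.range (d + 1),
          (PowerSeries.X : PowerSeries ℚ) ^ (r ^ 2) * (qpochA 2 r)⁻¹) := by
  rw [coeff_prod_odd_eq_coeff_prod_range, prod_one_add_X_pow_odd_eq_sum, map_sum, map_sum]
  exact sum_congr rfl fun r hr => coeff_X_pow_sq_mul_gaussBinom (mem_range_succ_iff.mp hr)
end

section
/- Fix nonnegative integers n, n₁, N with 2n₁ ≤ n. The number of partitions of N of the form N = n₁² + a₁ + ⋯ + a_{n₁} with n−2n₁ ≥ a₁ ≥ ⋯ ≥ a_{n₁} ≥ 0 equals the number of partitions of N with largest part at most ⌊(n+1)/2⌋, at most ⌊n/2⌋ parts, exactly n₁ diagonal hooks, and all n₁ successive ranks equal to 0 or 1. -/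
/-- Length of the `l`-th column (1-indexed) of the Ferrers diagram:
the number of parts that are `≥ l`. -/
def colLen {N : ℕ} (p : Nat.Partition N) (l : ℕ) : ℕ :=
  (p.parts.filter (fun x => l ≤ x)).card

/-- Length of the `l`-th row (1-indexed) of the Ferrers diagram, i.e. the `l`-th
largest part: the number of columns of length `≥ l`. -/
def rowLen {N : ℕ} (p : Nat.Partition N) (l : ℕ) : ℕ :=
  ((Finset.range (N + 1)).filter (fun m => l ≤ colLen p (m + 1))).card

/-- The number of diagonal hooks (right angles) = size of the Durfee square. -/
def durfee {N : ℕ} (p : Nat.Partition N) : ℕ :=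
  ((Finset.range (N + 1)).filter (fun l => l + 1 ≤ rowLen p (l + 1))).card

/-- The `l`-th successive rank (1-indexed): length of the `l`-th row minus length
of the `l`-th column. -/
def srank {N : ℕ} (p : Nat.Partition N) (l : ℕ) : ℤ :=
  (rowLen p l : ℤ) - (colLen p l : ℤ)

/-! A partition with Durfee square `n₁` is the `n₁ × n₁` square together with the cells to the
right of it in its first `n₁` rows and the cells below it in its first `n₁` columns, so it is
determined by the amounts `u l`, `v l` by which its `l`-th row and column prolong the square; both
sequences are weakly decreasing and, conversely, any two weakly decreasing sequences supported on
`[0, n₁)` arise in this way (transposition swaps `u` and `v`). The `l`-th successive rank is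
`u l - v l`, so all ranks lie in `{0, 1}` exactly when `u l = ⌈a l / 2⌉` and `v l = ⌊a l / 2⌋` for
`a l = u l + v l`. Then `N = n₁² + ∑ a l`, `a` is weakly decreasing, and the box condition on the
first row and column reads `a 0 ≤ n - 2 n₁`. -/

open Finset

lemma lt_card_filter_range_iff {n : ℕ} {P : ℕ → Prop} [DecidablePred P]
    (hdown : ∀ x y, y ≤ x → P x → P y) (hbound : ∀ x, P x → x < n) (t : ℕ) :
    t < #{x ∈ range n | P x} ↔ P t := by
  constructor
  · intro ht
    by_contra hPt
    have : #{x ∈ range n | P x} ≤ #(range t) :=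
      card_le_card fun x hx => by
        simp only [mem_filter, mem_range] at hx ⊢
        by_contra hxt
        exact hPt (hdown x t (by omega) hx.2)
    rw [card_range] at this
    omega
  · intro hPt
    calc t < #(range (t + 1)) := by simp
      _ ≤ _ := card_le_card fun x hx => by
        simp only [mem_filter, mem_range] at hx ⊢
        exact ⟨by have := hbound t hPt; omega, hdown t x (by omega) hPt⟩

lemma card_filter_range_lt {K c : ℕ} (hc : c ≤ K) : #{k ∈ range K | k < c} = c :=
  eq_of_forall_lt_iff <| lt_card_filter_range_iff (fun _ _ hyx hx => by omega)
    (fun _ hx => by omega)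

lemma sum_range_card_filter_succ_le (s : Multiset ℕ) {K : ℕ} (hK : ∀ x ∈ s, x ≤ K) :
    ∑ m ∈ range K, Multiset.card (s.filter (m + 1 ≤ ·)) = s.sum := by
  induction s using Multiset.induction_on with
  | empty => simp
  | cons x s ih =>
    have hx : ∀ m, Multiset.card (if m + 1 ≤ x then {x} else 0) = if m + 1 ≤ x then 1 else 0 :=
      fun m => by split_ifs <;> rfl
    simp only [Multiset.filter_cons, Multiset.card_add, sum_add_distrib, Multiset.sum_cons, hx,
      ← card_filter, ih fun y hy => hK y (Multiset.mem_cons_of_mem hy)]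
    exact congrArg (· + s.sum) (card_filter_range_lt (hK x (Multiset.mem_cons_self x s)))

lemma count_add_countP_succ_le (s : Multiset ℕ) (k : ℕ) :
    s.count k + s.countP (k + 1 ≤ ·) = s.countP (k ≤ ·) := by
  induction s using Multiset.induction_on with
  | empty => simp
  | cons x s ih =>
    simp only [Multiset.count_cons, Multiset.countP_cons]
    split_ifs <;> omega

section FerrersDiagram

variable {N : ℕ} (p : Nat.Partition N)

lemma colLen_antitone : Antitone (colLen p) := fun _ _ hll' =>
  Multiset.card_le_card <| Multiset.monotone_filter_right _ fun _ hx => hll'.trans hx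

lemma colLen_le_card_parts (l : ℕ) : colLen p l ≤ Multiset.card p.parts :=
  Multiset.card_le_card (Multiset.filter_le _ _)

lemma colLen_one : colLen p 1 = Multiset.card p.parts :=
  congrArg Multiset.card (Multiset.filter_eq_self.2 fun _ hx => p.parts_pos hx)

lemma colLen_succ_eq_zero_iff {K : ℕ} : colLen p (K + 1) = 0 ↔ ∀ x ∈ p.parts, x ≤ K := by
  simp only [colLen, Multiset.card_eq_zero, Multiset.filter_eq_nil, not_le, Nat.lt_succ_iff]

lemma sum_colLen {K : ℕ} (hK : N ≤ K) : ∑ m ∈ range K, colLen p (m + 1) = N := by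
  calc _ = p.parts.sum := sum_range_card_filter_succ_le p.parts fun x hx =>
        (Nat.Partition.le_of_mem_parts hx).trans hK
    _ = N := p.parts_sum

lemma lt_rowLen_iff {l m : ℕ} : m < rowLen p (l + 1) ↔ l + 1 ≤ colLen p (m + 1) := by
  refine lt_card_filter_range_iff (fun x y hyx hx => hx.trans (colLen_antitone p (by omega)))
    (fun x hx => ?_) m
  by_contra! hNx
  have : colLen p (x + 1) = 0 := (colLen_succ_eq_zero_iff p).2 fun y hy =>
    (Nat.Partition.le_of_mem_parts hy).trans (by omega)
  omega

lemma lt_colLen_iff {l m : ℕ} : m < colLen p (l + 1) ↔ l + 1 ≤ rowLen p (m + 1) := by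
  rw [Nat.lt_iff_add_one_le, ← lt_rowLen_iff p, Nat.lt_iff_add_one_le]

lemma rowLen_antitone : Antitone (rowLen p) := fun _ _ hll' =>
  card_le_card <| monotone_filter_right _ fun _ _ hm => hll'.trans hm

lemma rowLen_le_of_forall_le {l B : ℕ} (hB : ∀ x ∈ p.parts, x ≤ B) :
    rowLen p (l + 1) ≤ B := by
  by_contra! hBl
  have := (lt_rowLen_iff p).1 hBl
  have := (colLen_succ_eq_zero_iff p).2 hB
  omega

lemma rowLen_le (l : ℕ) : rowLen p (l + 1) ≤ N :=
  rowLen_le_of_forall_le p fun _ hx => Nat.Partition.le_of_mem_parts hx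

lemma lt_durfee_iff {t : ℕ} : t < durfee p ↔ t < rowLen p (t + 1) := by
  refine lt_card_filter_range_iff (fun x y hyx hx => ?_) (fun x hx => ?_) t
  · exact (by omega : y + 1 ≤ x + 1).trans (hx.trans (rowLen_antitone p (by omega)))
  · have := rowLen_le p x
    change x < rowLen p (x + 1) at hx
    omega

lemma count_parts_succ (k : ℕ) :
    p.parts.count (k + 1) = colLen p (k + 1) - colLen p (k + 1 + 1) := by
  have := count_add_countP_succ_le p.parts (k + 1)
  simp only [colLen, ← Multiset.countP_eq_card_filter]
  omega

lemma ext_of_colLen {q : Nat.Partition N} (h : ∀ m, colLen p (m + 1) = colLen q (m + 1)) :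
    p = q := by
  refine Nat.Partition.ext (Multiset.ext.2 fun k => ?_)
  rcases k with _ | k
  · rw [Multiset.count_eq_zero.2 fun h0 => lt_irrefl 0 (p.parts_pos h0),
      Multiset.count_eq_zero.2 fun h0 => lt_irrefl 0 (q.parts_pos h0)]
  · rw [count_parts_succ, count_parts_succ, h, h]

lemma durfee_le_rowLen {l : ℕ} (hl : l < durfee p) : durfee p ≤ rowLen p (l + 1) := by
  have := (lt_durfee_iff p (t := durfee p - 1)).1 (by omega)
  rw [Nat.sub_add_cancel (by omega)] at this
  exact (by omega : durfee p ≤ rowLen p (durfee p)).trans (rowLen_antitone p (by omega))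

lemma rowLen_le_durfee {l : ℕ} (hl : durfee p ≤ l) : rowLen p (l + 1) ≤ durfee p :=
  (rowLen_antitone p (by omega)).trans (not_lt.1 (mt (lt_durfee_iff p).2 (lt_irrefl _)))

lemma durfee_le_colLen {l : ℕ} (hl : l < durfee p) : durfee p ≤ colLen p (l + 1) := by
  have h := durfee_le_rowLen p (show durfee p - 1 < durfee p by omega)
  have := (lt_colLen_iff p).2 ((Nat.succ_le_of_lt hl).trans h)
  omega

lemma colLen_le_durfee {l : ℕ} (hl : durfee p ≤ l) : colLen p (l + 1) ≤ durfee p := by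
  by_contra! h
  have := (lt_colLen_iff p).1 h
  have := rowLen_le_durfee p (le_refl _)
  omega

end FerrersDiagram

/-- Column lengths of the diagram formed by an `n₁ × n₁` square whose `j`-th row is prolonged
by `u j` cells and whose `j`-th column by `v j` cells (`j < n₁`); swapping `u` and `v` gives its
row lengths. -/
def durfeeColLen (n₁ : ℕ) (u v : ℕ → ℕ) (m : ℕ) : ℕ :=
  if m < n₁ then n₁ + v m else #{j ∈ range n₁ | m - n₁ < u j}

section DurfeeColLen

variable {n₁ : ℕ} {u v : ℕ → ℕ} {m : ℕ}

lemma durfeeColLen_of_lt (hm : m < n₁) : durfeeColLen n₁ u v m = n₁ + v m := if_pos hm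

lemma durfeeColLen_of_le (hm : n₁ ≤ m) :
    durfeeColLen n₁ u v m = #{j ∈ range n₁ | m - n₁ < u j} := if_neg (not_lt.2 hm)

lemma durfeeColLen_le_of_le (hm : n₁ ≤ m) : durfeeColLen n₁ u v m ≤ n₁ := by
  rw [durfeeColLen_of_le hm]
  exact (card_filter_le _ _).trans (card_range n₁).le

lemma durfeeColLen_le (hv : Antitone v) (m : ℕ) : durfeeColLen n₁ u v m ≤ n₁ + v 0 := by
  rcases lt_or_ge m n₁ with hm | hm
  · rw [durfeeColLen_of_lt hm]
    exact Nat.add_le_add_left (hv (Nat.zero_le m)) n₁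
  · exact (durfeeColLen_le_of_le hm).trans (Nat.le_add_right _ _)

lemma lt_durfeeColLen_iff_of_le (hu : Antitone u) (hu0 : ∀ j, n₁ ≤ j → u j = 0) (hm : n₁ ≤ m)
    (i : ℕ) : i < durfeeColLen n₁ u v m ↔ m - n₁ < u i := by
  rw [durfeeColLen_of_le hm]
  refine lt_card_filter_range_iff (fun x y hyx hx => hx.trans_le (hu hyx)) (fun x hx => ?_) i
  by_contra! hx'
  rw [hu0 x hx'] at hx
  omega

lemma lt_durfeeColLen_iff (hu : Antitone u) (hv : Antitone v) (hu0 : ∀ j, n₁ ≤ j → u j = 0)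
    (hv0 : ∀ j, n₁ ≤ j → v j = 0) (i m : ℕ) :
    i < durfeeColLen n₁ u v m ↔ m < durfeeColLen n₁ v u i := by
  rcases lt_or_ge m n₁ with hm | hm <;> rcases lt_or_ge i n₁ with hi | hi
  · rw [durfeeColLen_of_lt hm, durfeeColLen_of_lt hi]
    omega
  · rw [durfeeColLen_of_lt hm, lt_durfeeColLen_iff_of_le hv hv0 hi]
    omega
  · rw [durfeeColLen_of_lt hi, lt_durfeeColLen_iff_of_le hu hu0 hm]
    omega
  · have := durfeeColLen_le_of_le (u := u) (v := v) hm
    have := durfeeColLen_le_of_le (u := v) (v := u) hi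
    omega

lemma sum_durfeeColLen {K : ℕ} (hK : ∀ j < n₁, u j ≤ K) :
    ∑ m ∈ range (n₁ + K), durfeeColLen n₁ u v m
      = n₁ ^ 2 + ∑ j ∈ range n₁, u j + ∑ j ∈ range n₁, v j := by
  have hsquare : ∑ m ∈ range n₁, durfeeColLen n₁ u v m = n₁ ^ 2 + ∑ j ∈ range n₁, v j := by
    rw [sum_congr rfl fun m hm => durfeeColLen_of_lt (mem_range.1 hm), sum_add_distrib,
      sum_const, card_range, smul_eq_mul, sq]
  have harms : ∑ k ∈ range K, durfeeColLen n₁ u v (n₁ + k) = ∑ j ∈ range n₁, u j := by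
    rw [sum_congr rfl fun k _ => by
      rw [durfeeColLen_of_le (Nat.le_add_right n₁ k), Nat.add_sub_cancel_left, card_filter]]
    rw [sum_comm]
    refine sum_congr rfl fun j hj => ?_
    rw [← card_filter, card_filter_range_lt (hK j (mem_range.1 hj))]
  rw [sum_range_add, hsquare, harms]
  ring

end DurfeeColLen

section DurfeeDecomposition

variable {N : ℕ} (p : Nat.Partition N)

lemma colLen_eq_durfeeColLen (m : ℕ) :
    colLen p (m + 1) = durfeeColLen (durfee p) (fun j => rowLen p (j + 1) - durfee p)
      (fun j => colLen p (j + 1) - durfee p) m := by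
  rcases lt_or_ge m (durfee p) with hm | hm
  · rw [durfeeColLen_of_lt hm]
    have := durfee_le_colLen p hm
    omega
  · rw [durfeeColLen_of_le hm]
    refine eq_of_forall_lt_iff fun t => ?_
    rw [lt_colLen_iff p, lt_card_filter_range_iff (fun x y hyx hx => ?_) (fun x hx => ?_) t]
    · omega
    · have : rowLen p (x + 1) ≤ rowLen p (y + 1) := rowLen_antitone p (by omega)
      omega
    · by_contra! hx'
      have := rowLen_le_durfee p hx'
      omega

lemma eq_durfee_sq_add_sum :
    N = durfee p ^ 2 + ∑ j ∈ range (durfee p), (rowLen p (j + 1) - durfee p)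
      + ∑ j ∈ range (durfee p), (colLen p (j + 1) - durfee p) :=
  calc N = ∑ m ∈ range (durfee p + N), colLen p (m + 1) := (sum_colLen p (by omega)).symm
    _ = _ := by
      rw [sum_congr rfl fun m _ => colLen_eq_durfeeColLen p m]
      exact sum_durfeeColLen fun j _ => by have := rowLen_le p j; omega

end DurfeeDecomposition

section OfSums

variable {N M : ℕ} {r d : ℕ → ℕ}

lemma colLen_ofSums (hrd : ∀ i m, m < r i ↔ i < d m) (hd : ∀ m, d m ≤ M)
    (hN : ∑ i ∈ range M, r i = N) (m : ℕ) :
    colLen (Nat.Partition.ofSums N ((range M).val.map r) hN) (m + 1) = d m := by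
  calc colLen (Nat.Partition.ofSums N ((range M).val.map r) hN) (m + 1)
      = #{i ∈ range M | m < r i} := by
        simp only [colLen, Nat.Partition.ofSums, Multiset.filter_filter, Finset.card_def,
          Finset.filter_val]
        rw [Multiset.filter_congr fun x _ => and_iff_left_of_imp fun (hx : m + 1 ≤ x) => by omega,
          Multiset.filter_map, Multiset.card_map]
        rfl
    _ = #{i ∈ range M | i < d m} := by simp only [hrd]
    _ = d m := card_filter_range_lt (hd m)

lemma rowLen_ofSums (hrd : ∀ i m, m < r i ↔ i < d m) (hd : ∀ m, d m ≤ M)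
    (hN : ∑ i ∈ range M, r i = N) (i : ℕ) :
    rowLen (Nat.Partition.ofSums N ((range M).val.map r) hN) (i + 1) = r i :=
  eq_of_forall_lt_iff fun m => by rw [lt_rowLen_iff, colLen_ofSums hrd hd hN, hrd]; rfl

end OfSums

def padZero {n : ℕ} (a : Fin n → ℕ) (j : ℕ) : ℕ := if h : j < n then a ⟨j, h⟩ else 0

section PadZero

variable {n : ℕ} {a : Fin n → ℕ}

lemma padZero_of_lt {j : ℕ} (hj : j < n) : padZero a j = a ⟨j, hj⟩ := dif_pos hj

@[simp] lemma padZero_coe (l : Fin n) : padZero a l = a l := padZero_of_lt l.isLt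

lemma padZero_of_le {j : ℕ} (hj : n ≤ j) : padZero a j = 0 := dif_neg (not_lt.2 hj)

lemma padZero_le {B : ℕ} (hB : ∀ l, a l ≤ B) (j : ℕ) : padZero a j ≤ B := by
  unfold padZero
  split_ifs
  exacts [hB _, Nat.zero_le B]

lemma padZero_antitone (ha : Antitone a) : Antitone (padZero a) := by
  intro j k hjk
  unfold padZero
  split_ifs
  · exact ha (Fin.mk_le_mk.2 hjk)
  · omega
  · exact Nat.zero_le _
  · exact le_rfl

lemma sum_range_padZero : ∑ j ∈ range n, padZero a j = ∑ l, a l := by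
  rw [← Fin.sum_univ_eq_sum_range]
  simp

end PadZero

section HookArmLeg

variable {n₁ : ℕ} (a : Fin n₁ → ℕ)

def hookArm (j : ℕ) : ℕ := (padZero a j + 1) / 2

def hookLeg (j : ℕ) : ℕ := padZero a j / 2

lemma hookLeg_add_hookArm (j : ℕ) : hookLeg a j + hookArm a j = padZero a j := by
  unfold hookLeg hookArm
  omega

variable {a}

lemma hookArm_antitone (ha : Antitone a) : Antitone (hookArm a) :=
  fun _ _ h => Nat.div_le_div_right (Nat.add_le_add_right (padZero_antitone ha h) 1)

lemma hookLeg_antitone (ha : Antitone a) : Antitone (hookLeg a) :=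
  fun _ _ h => Nat.div_le_div_right (padZero_antitone ha h)

lemma hookArm_of_le {j : ℕ} (hj : n₁ ≤ j) : hookArm a j = 0 := by
  rw [hookArm, padZero_of_le hj]

lemma hookLeg_of_le {j : ℕ} (hj : n₁ ≤ j) : hookLeg a j = 0 := by
  rw [hookLeg, padZero_of_le hj]

end HookArmLeg

section HookExcess

variable {N : ℕ} (n₁ : ℕ) (p : Nat.Partition N)

/-- `hookExcess n₁ p l` is the length of the `l`-th diagonal hook of `p` minus that of the
`l`-th diagonal hook of the `n₁ × n₁` square. -/
def hookExcess (l : Fin n₁) : ℕ := rowLen p (l + 1) + colLen p (l + 1) - 2 * n₁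

variable {n₁ p}

lemma hookExcess_antitone : Antitone (hookExcess n₁ p) := fun l l' hll' => by
  have := rowLen_antitone p (show (l : ℕ) + 1 ≤ l' + 1 from Nat.succ_le_succ hll')
  have := colLen_antitone p (show (l : ℕ) + 1 ≤ l' + 1 from Nat.succ_le_succ hll')
  unfold hookExcess
  omega

lemma hookExcess_le {n : ℕ} (hrow : ∀ x ∈ p.parts, x ≤ (n + 1) / 2)
    (hcol : Multiset.card p.parts ≤ n / 2) (l : Fin n₁) : hookExcess n₁ p l ≤ n - 2 * n₁ := by
  have := rowLen_le_of_forall_le p (l := l) hrow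
  have := (colLen_le_card_parts p (l + 1)).trans hcol
  unfold hookExcess
  omega

lemma eq_sq_add_sum_hookExcess (hd : durfee p = n₁) : N = n₁ ^ 2 + ∑ l, hookExcess n₁ p l := by
  subst hd
  calc N = _ := eq_durfee_sq_add_sum p
    _ = _ := by
      simp only [hookExcess]
      rw [add_assoc, ← sum_add_distrib, Fin.sum_univ_eq_sum_range
        (fun j => rowLen p (j + 1) + colLen p (j + 1) - 2 * durfee p)]
      refine congrArg _ (sum_congr rfl fun j hj => ?_)
      have := durfee_le_rowLen p (mem_range.1 hj)
      have := durfee_le_colLen p (mem_range.1 hj)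
      omega

lemma hookArm_hookExcess_and_hookLeg_hookExcess (hd : durfee p = n₁)
    (hrank : ∀ l, 1 ≤ l → l ≤ n₁ → srank p l = 0 ∨ srank p l = 1) (j : ℕ) :
    hookArm (hookExcess n₁ p) j = rowLen p (j + 1) - n₁ ∧
      hookLeg (hookExcess n₁ p) j = colLen p (j + 1) - n₁ := by
  subst hd
  unfold hookArm hookLeg
  rcases lt_or_ge j (durfee p) with hj | hj
  · have := durfee_le_rowLen p hj
    have := durfee_le_colLen p hj
    have := hrank (j + 1) (by omega) hj
    have hpad : padZero (hookExcess (durfee p) p) j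
        = rowLen p (j + 1) + colLen p (j + 1) - 2 * durfee p := padZero_of_lt hj
    unfold srank at this
    omega
  · have := rowLen_le_durfee p hj
    have := colLen_le_durfee p hj
    rw [padZero_of_le hj]
    omega

end HookExcess

section HookPartition

variable {n₁ N : ℕ} {a : Fin n₁ → ℕ}

lemma padZero_le_of_eq_sq_add_sum (hN : N = n₁ ^ 2 + ∑ l, a l) (j : ℕ) : padZero a j ≤ N :=
  padZero_le (fun l => (single_le_sum (fun _ _ => Nat.zero_le _) (mem_univ l)).trans (by omega)) j

lemma sum_hookRows (hN : N = n₁ ^ 2 + ∑ l, a l) :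
    ∑ i ∈ range (n₁ + N), durfeeColLen n₁ (hookLeg a) (hookArm a) i = N := by
  rw [sum_durfeeColLen (u := hookLeg a) fun j _ =>
      (Nat.div_le_self _ 2).trans (padZero_le_of_eq_sq_add_sum hN j), add_assoc,
    ← sum_add_distrib, sum_congr rfl fun j _ => hookLeg_add_hookArm a j, sum_range_padZero, hN]

/-- The partition whose `l`-th row and column prolong the `n₁ × n₁` square by `⌈a l / 2⌉` and
`⌊a l / 2⌋` cells; its parts are its row lengths. -/
def hookPartition (a : Fin n₁ → ℕ) (hN : N = n₁ ^ 2 + ∑ l, a l) : Nat.Partition N :=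
  Nat.Partition.ofSums N ((range (n₁ + N)).val.map (durfeeColLen n₁ (hookLeg a) (hookArm a)))
    (sum_hookRows hN)

variable (ha : Antitone a) (hN : N = n₁ ^ 2 + ∑ l, a l)
include ha

lemma lt_hookRows_iff_lt_hookCols (i m : ℕ) :
    m < durfeeColLen n₁ (hookLeg a) (hookArm a) i ↔
      i < durfeeColLen n₁ (hookArm a) (hookLeg a) m :=
  Iff.symm <| lt_durfeeColLen_iff (hookArm_antitone ha) (hookLeg_antitone ha)
    (fun _ => hookArm_of_le) (fun _ => hookLeg_of_le) i m

include hN in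
lemma hookCols_le (m : ℕ) : durfeeColLen n₁ (hookArm a) (hookLeg a) m ≤ n₁ + N :=
  (durfeeColLen_le (hookLeg_antitone ha) m).trans <| Nat.add_le_add_left
    ((Nat.div_le_self _ 2).trans (padZero_le_of_eq_sq_add_sum hN 0)) n₁

lemma colLen_hookPartition (m : ℕ) :
    colLen (hookPartition a hN) (m + 1) = durfeeColLen n₁ (hookArm a) (hookLeg a) m :=
  colLen_ofSums (lt_hookRows_iff_lt_hookCols ha) (hookCols_le ha hN) _ m

lemma rowLen_hookPartition (i : ℕ) :
    rowLen (hookPartition a hN) (i + 1) = durfeeColLen n₁ (hookLeg a) (hookArm a) i :=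
  rowLen_ofSums (lt_hookRows_iff_lt_hookCols ha) (hookCols_le ha hN) _ i

lemma durfee_hookPartition : durfee (hookPartition a hN) = n₁ := by
  refine eq_of_forall_lt_iff fun t => ?_
  rw [lt_durfee_iff, rowLen_hookPartition ha hN]
  rcases lt_or_ge t n₁ with ht | ht
  · rw [durfeeColLen_of_lt ht]
    omega
  · have := durfeeColLen_le_of_le (u := hookLeg a) (v := hookArm a) ht
    omega

lemma srank_hookPartition {l : ℕ} (hl₁ : 1 ≤ l) (hl : l ≤ n₁) :
    srank (hookPartition a hN) l = 0 ∨ srank (hookPartition a hN) l = 1 := by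
  obtain ⟨k, rfl⟩ := Nat.exists_eq_add_of_le' hl₁
  rw [srank, rowLen_hookPartition ha hN, colLen_hookPartition ha hN, durfeeColLen_of_lt hl,
    durfeeColLen_of_lt hl, hookArm, hookLeg]
  omega

variable {n : ℕ}

include hN in
lemma parts_le_hookPartition (h : 2 * n₁ ≤ n) (hb : ∀ l, a l ≤ n - 2 * n₁) :
    ∀ x ∈ (hookPartition a hN).parts, x ≤ (n + 1) / 2 := by
  rw [← colLen_succ_eq_zero_iff, colLen_hookPartition ha hN, durfeeColLen_of_le (by omega)]
  refine card_eq_zero.2 (filter_eq_empty_iff.2 fun j _ => ?_)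
  have := padZero_le hb j
  unfold hookArm
  omega

lemma card_parts_hookPartition (h : 2 * n₁ ≤ n) (hb : ∀ l, a l ≤ n - 2 * n₁) :
    Multiset.card (hookPartition a hN).parts ≤ n / 2 :=
  calc Multiset.card (hookPartition a hN).parts
      = colLen (hookPartition a hN) (0 + 1) := (colLen_one _).symm
    _ = _ := colLen_hookPartition ha hN 0
    _ ≤ n₁ + hookLeg a 0 := durfeeColLen_le (hookLeg_antitone ha) 0
    _ ≤ n / 2 := by have := padZero_le hb 0; unfold hookLeg; omega

lemma hookExcess_hookPartition : hookExcess n₁ (hookPartition a hN) = a := by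
  funext l
  have := hookLeg_add_hookArm a l
  simp only [hookExcess, rowLen_hookPartition ha hN, colLen_hookPartition ha hN,
    durfeeColLen_of_lt l.isLt, padZero_coe] at this ⊢
  omega

omit ha in
lemma hookPartition_hookExcess {p : Nat.Partition N} (hd : durfee p = n₁)
    (hrank : ∀ l, 1 ≤ l → l ≤ n₁ → srank p l = 0 ∨ srank p l = 1)
    (hN : N = n₁ ^ 2 + ∑ l, hookExcess n₁ p l) : hookPartition (hookExcess n₁ p) hN = p := by
  have harmleg := hookArm_hookExcess_and_hookLeg_hookExcess hd hrank
  refine ext_of_colLen _ fun m => ?_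
  rw [colLen_hookPartition hookExcess_antitone hN, colLen_eq_durfeeColLen p, hd]
  congr 1 <;> funext j
  exacts [(harmleg j).1, (harmleg j).2]

end HookPartition

/-- Case `k = 2, i = 2` of the main bijection: partitions
`N = n₁² + a₁ + ⋯ + a_{n₁}` with `n - 2n₁ ≥ a₁ ≥ ⋯ ≥ a_{n₁} ≥ 0` are equinumerous
with partitions of `N` in a `⌊(n+1)/2⌋ × ⌊n/2⌋` box with exactly `n₁` diagonal
hooks and all successive ranks equal to `0` or `1`. -/
theorem bijection_Q32 (n n₁ N : ℕ) (h : 2 * n₁ ≤ n) :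
    Nat.card {a : Fin n₁ → ℕ //
        Antitone a ∧ (∀ p, a p ≤ n - 2 * n₁) ∧ N = n₁ ^ 2 + ∑ p, a p} =
      Nat.card {p : Nat.Partition N //
        (∀ x ∈ p.parts, x ≤ (n + 1) / 2) ∧ Multiset.card p.parts ≤ n / 2 ∧
        durfee p = n₁ ∧
        ∀ l, 1 ≤ l → l ≤ n₁ → srank p l = 0 ∨ srank p l = 1} :=
  Nat.card_congr
    { toFun := fun ⟨a, ha, hb, hN⟩ => ⟨hookPartition a hN, parts_le_hookPartition ha hN h hb,
        card_parts_hookPartition ha hN h hb, durfee_hookPartition ha hN,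
        fun _ => srank_hookPartition ha hN⟩
      invFun := fun ⟨p, hrow, hcol, hd, _⟩ => ⟨hookExcess n₁ p, hookExcess_antitone,
        hookExcess_le hrow hcol, eq_sq_add_sum_hookExcess hd⟩
      left_inv := fun ⟨_, ha, _, hN⟩ => Subtype.ext (hookExcess_hookPartition ha hN)
      right_inv := fun ⟨_, _, _, hd, hrank⟩ => Subtype.ext
        (hookPartition_hookExcess hd hrank (eq_sq_add_sum_hookExcess hd)) }
end

section
/- Fix nonnegative integers n, n₁, N with 2n₁ ≤ n−1. The number of partitions of N of the form N = n₁(n₁+1) + a₁ + ⋯ + a_{n₁} with n−2n₁−1 ≥ a₁ ≥ ⋯ ≥ a_{n₁} ≥ 0 equals the number of partitions of N with largest part at most ⌊(n+2)/2⌋, at most ⌊(n−1)/2⌋ parts, exactly n₁ diagonal hooks, and all successive ranks equal to 1 or 2. -/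
open Finset

theorem Finset.mem_iff_card_Iio_lt_card {α : Type*} [LinearOrder α] [LocallyFiniteOrderBot α]
    {s : Finset α} (hs : IsLowerSet (s : Set α)) (a : α) : a ∈ s ↔ #(Iio a) < #s := by
  constructor
  · intro ha
    calc #(Iio a) < #(Iic a) := by rw [Iic_eq_cons_Iio, card_cons]; omega
      _ ≤ #s := card_le_card fun x hx => hs (mem_Iic.mp hx) ha
  · intro hlt
    by_contra ha
    refine hlt.not_ge (card_le_card fun x hx => mem_Iio.mpr ?_)
    by_contra hax
    exact ha (hs (not_lt.mp hax) hx)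

theorem Nat.lt_card_filter_range_iff {q : ℕ → Prop} [DecidablePred q]
    (hq : ∀ ⦃i j⦄, i ≤ j → q j → q i) (n l : ℕ) : l < #{m ∈ range n | q m} ↔ l < n ∧ q l := by
  have hs : IsLowerSet (({m ∈ range n | q m} : Finset ℕ) : Set ℕ) := fun i j hji hi => by
    simp only [coe_filter, mem_range, Set.mem_ofPred_eq] at hi ⊢
    exact ⟨by omega, hq hji hi.2⟩
  simpa [Nat.card_Iio] using ((mem_iff_card_Iio_lt_card hs l).symm)

theorem Nat.card_filter_range_lt {M x : ℕ} (hx : x ≤ M) : #{j ∈ range M | j < x} = x := by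
  rw [show {j ∈ range M | j < x} = range x by ext; simp; omega, card_range]

theorem Fin.lt_card_filter_iff {m : ℕ} {P : Fin m → Prop} [DecidablePred P]
    (hP : ∀ ⦃i j⦄, i ≤ j → P j → P i) (k : Fin m) : (k : ℕ) < #{l | P l} ↔ P k := by
  have hs : IsLowerSet (({l | P l} : Finset (Fin m)) : Set (Fin m)) := fun i j hji hi => by
    simp only [coe_filter, mem_univ, true_and, Set.mem_ofPred_eq] at hi ⊢
    exact hP hji hi
  rw [← Fin.card_Iio k]
  exact (mem_iff_card_Iio_lt_card hs k).symm.trans (by simp)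

theorem Antitone.lt_card_filter_lt_iff {m : ℕ} {b : Fin m → ℕ} (hb : Antitone b) (t : ℕ)
    (k : Fin m) : (k : ℕ) < #{l | t < b l} ↔ t < b k :=
  Fin.lt_card_filter_iff (fun _ _ hij h => h.trans_le (hb hij)) k

namespace Nat.Partition

variable {N : ℕ} (p : Nat.Partition N)

theorem colLen_succ_eq_countP (v : ℕ) : colLen p (v + 1) = p.parts.countP (v < ·) :=
  (Multiset.countP_eq_card_filter _ _).symm

theorem colLen_antitone : Antitone (colLen p) := fun _ _ hk =>
  Multiset.card_le_card (Multiset.monotone_filter_right _ fun _ hx => hk.trans hx)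

theorem rowLen_antitone : Antitone (rowLen p) := fun _ _ hl =>
  card_le_card (monotone_filter_right _ fun _ _ hm => hl.trans hm)

theorem colLen_le_card (v : ℕ) : colLen p v ≤ Multiset.card p.parts :=
  Multiset.card_le_card (Multiset.filter_le _ _)

theorem lt_rowLen_iff (k l : ℕ) : k < rowLen p (l + 1) ↔ l < colLen p (k + 1) := by
  rw [rowLen, Nat.lt_card_filter_range_iff fun i j hij h => h.trans (p.colLen_antitone (by omega))]
  refine ⟨fun h => h.2, fun h => ⟨?_, h⟩⟩
  obtain ⟨x, hx, hkx⟩ := Multiset.exists_mem_of_ne_zero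
    (Multiset.card_pos.mp (Nat.zero_lt_of_lt h) : Multiset.filter _ p.parts ≠ 0) |>.imp
    fun x hx => Multiset.mem_filter.mp hx
  have := Multiset.le_sum_of_mem hx
  rw [p.parts_sum] at this
  omega

theorem rowLen_le_of_forall_le {B : ℕ} (hB : ∀ x ∈ p.parts, x ≤ B) (l : ℕ) :
    rowLen p (l + 1) ≤ B := by
  by_contra! h
  obtain ⟨x, hx⟩ := Multiset.card_pos_iff_exists_mem.mp ((p.lt_rowLen_iff B l).mp h).pos
  rw [Multiset.mem_filter] at hx
  exact absurd (hB x hx.1) (by omega)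

theorem lt_durfee_iff (l : ℕ) : l < durfee p ↔ l < rowLen p (l + 1) := by
  rw [durfee, Nat.lt_card_filter_range_iff fun i j hij h =>
    (show i + 1 ≤ j + 1 by omega).trans (h.trans (p.rowLen_antitone (by omega)))]
  refine ⟨fun h => h.2, fun h => ⟨?_, h⟩⟩
  have : rowLen p (l + 1) ≤ N + 1 := (card_filter_le _ _).trans (card_range _).le
  omega

theorem durfee_le_rowLen {l : ℕ} (hl : l < durfee p) : durfee p ≤ rowLen p (l + 1) := by
  have h := (p.lt_durfee_iff (durfee p - 1)).mp (by omega)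
  rw [Nat.sub_add_cancel (by omega)] at h
  exact (Nat.le_of_pred_lt h).trans (p.rowLen_antitone (by omega))

theorem durfee_le_colLen {l : ℕ} (hl : l < durfee p) : durfee p ≤ colLen p (l + 1) := by
  have hrow : l < rowLen p (durfee p - 1 + 1) :=
    hl.trans_le (p.durfee_le_rowLen (show durfee p - 1 < durfee p by omega))
  have h := (p.lt_rowLen_iff l (durfee p - 1)).mp hrow
  omega

theorem colLen_eq_card_of_durfee_le {v : ℕ} (hv : durfee p ≤ v) :
    colLen p (v + 1) = #{l : Fin (durfee p) | v < rowLen p (l + 1)} := by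
  have hle : colLen p (v + 1) ≤ durfee p := by
    by_contra! h
    have h' : durfee p < colLen p (durfee p + 1) := h.trans_le (p.colLen_antitone (by omega))
    rw [← lt_rowLen_iff, ← lt_durfee_iff] at h'
    exact h'.false
  simp_rw [lt_rowLen_iff]
  rw [Fin.card_filter_val_lt]
  omega

theorem parts_eq_of_colLen_eq {M : ℕ} (q : Nat.Partition M)
    (h : ∀ v, colLen p (v + 1) = colLen q (v + 1)) : p.parts = q.parts := by
  have hsplit : ∀ (s : Multiset ℕ) (v : ℕ),
      s.countP (v < ·) = s.count (v + 1) + s.countP (v + 1 < ·) := by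
    intro s v
    induction s using Multiset.induction with
    | empty => simp
    | cons a s ih =>
      rw [Multiset.countP_cons, Multiset.countP_cons, Multiset.count_cons, ih]
      split_ifs <;> omega
  ext (_ | v)
  · rw [Multiset.count_eq_zero_of_notMem fun h => (p.parts_pos h).false,
      Multiset.count_eq_zero_of_notMem fun h => (q.parts_pos h).false]
  · have h1 := hsplit p.parts v
    have h2 := hsplit q.parts v
    have e1 := h v
    have e2 := h (v + 1)
    rw [colLen_succ_eq_countP, colLen_succ_eq_countP] at e1 e2
    omega

end Nat.Partition

section Conjugate

variable {m : ℕ}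

def conjugateParts (b : Fin m → ℕ) : Multiset ℕ :=
  (range (univ.sup b)).val.map fun j => #{l | j < b l}

theorem sum_conjugateParts (b : Fin m → ℕ) : (conjugateParts b).sum = ∑ l, b l :=
  calc ∑ j ∈ range (univ.sup b), #{l | j < b l}
      = ∑ l, #{j ∈ range (univ.sup b) | j < b l} := by simp only [card_filter]; exact sum_comm
    _ = ∑ l, b l := sum_congr rfl fun l _ => Nat.card_filter_range_lt (le_sup (mem_univ l))

theorem card_conjugateParts (b : Fin m → ℕ) :
    Multiset.card (conjugateParts b) = univ.sup b := by
  simp [conjugateParts]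

theorem le_of_mem_conjugateParts {b : Fin m → ℕ} {x : ℕ} (hx : x ∈ conjugateParts b) :
    x ≤ m := by
  obtain ⟨j, -, rfl⟩ := Multiset.mem_map.mp hx
  exact (card_filter_le _ _).trans (by simp)

theorem pos_of_mem_conjugateParts {b : Fin m → ℕ} {x : ℕ} (hx : x ∈ conjugateParts b) :
    0 < x := by
  obtain ⟨j, hj, rfl⟩ := Multiset.mem_map.mp hx
  obtain ⟨l, -, hl⟩ := Finset.lt_sup_iff.mp (mem_range.mp hj)
  exact card_pos.mpr ⟨l, by simpa using hl⟩

theorem countP_lt_conjugateParts {b : Fin m → ℕ} (hb : Antitone b) (k : Fin m) :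
    (conjugateParts b).countP ((k : ℕ) < ·) = b k := by
  rw [conjugateParts, Multiset.countP_map]
  change #{j ∈ range (univ.sup b) | (k : ℕ) < #{l | j < b l}} = b k
  simp_rw [hb.lt_card_filter_lt_iff]
  exact Nat.card_filter_range_lt (le_sup (mem_univ k))

theorem countP_lt_conjugateParts_of_le {b : Fin m → ℕ} {k : ℕ} (hk : m ≤ k) :
    (conjugateParts b).countP (k < ·) = 0 :=
  Multiset.countP_eq_zero.mpr fun x hx => by have := le_of_mem_conjugateParts hx; omega

end Conjugate

section Frobenius

variable {d : ℕ}

/-- `d` rows `r` on top of the conjugate of `c - d`: when `r` and `c` are antitone and `≥ d`, the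
partition with a Durfee square of side `d` whose first `d` rows are `r` and columns are `c`. -/
def frobeniusParts (r c : Fin d → ℕ) : Multiset ℕ :=
  univ.val.map r + conjugateParts fun l => c l - d

theorem sum_frobeniusParts (r c : Fin d → ℕ) :
    (frobeniusParts r c).sum = ∑ l, (r l + (c l - d)) := by
  rw [frobeniusParts, Multiset.sum_add, sum_conjugateParts, sum_add_distrib]
  rfl

theorem card_frobeniusParts (r c : Fin d → ℕ) :
    Multiset.card (frobeniusParts r c) = d + univ.sup fun l => c l - d := by
  simp [frobeniusParts, card_conjugateParts]

theorem mem_frobeniusParts {r c : Fin d → ℕ} {x : ℕ} (hx : x ∈ frobeniusParts r c) :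
    (∃ l, r l = x) ∨ x ≤ d := by
  rcases Multiset.mem_add.mp hx with hx | hx
  · obtain ⟨l, -, rfl⟩ := Multiset.mem_map.mp hx
    exact .inl ⟨l, rfl⟩
  · exact .inr (le_of_mem_conjugateParts hx)

def ofFrobenius {N : ℕ} (r c : Fin d → ℕ) (hr : ∀ l, d ≤ r l)
    (hN : (frobeniusParts r c).sum = N) : Nat.Partition N where
  parts := frobeniusParts r c
  parts_pos {x} hx := by
    rcases Multiset.mem_add.mp hx with hx | hx
    · obtain ⟨l, -, rfl⟩ := Multiset.mem_map.mp hx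
      exact l.pos.trans_le (hr l)
    · exact pos_of_mem_conjugateParts hx
  parts_sum := hN

variable {N : ℕ} {r c : Fin d → ℕ} (hr : ∀ l, d ≤ r l) (hN : (frobeniusParts r c).sum = N)

theorem colLen_ofFrobenius_succ (hc : Antitone c) (hcd : ∀ l, d ≤ c l) (k : Fin d) :
    colLen (ofFrobenius r c hr hN) (k + 1) = c k := by
  have hrk : (univ.val.map r).countP ((k : ℕ) < ·) = d :=
    (Multiset.countP_eq_card.mpr fun x hx => by
      obtain ⟨l, -, rfl⟩ := Multiset.mem_map.mp hx
      exact k.isLt.trans_le (hr l)).trans (by simp)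
  have hc' : Antitone fun l => c l - d := fun i j hij => Nat.sub_le_sub_right (hc hij) d
  rw [Nat.Partition.colLen_succ_eq_countP]
  change (frobeniusParts r c).countP _ = _
  rw [frobeniusParts, Multiset.countP_add, hrk, countP_lt_conjugateParts hc' k]
  have := hcd k
  omega

theorem colLen_ofFrobenius_succ_of_le {v : ℕ} (hv : d ≤ v) :
    colLen (ofFrobenius r c hr hN) (v + 1) = #{l | v < r l} := by
  rw [Nat.Partition.colLen_succ_eq_countP]
  change (frobeniusParts r c).countP _ = _
  rw [frobeniusParts, Multiset.countP_add, countP_lt_conjugateParts_of_le hv, add_zero,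
    Multiset.countP_map]
  rfl

theorem rowLen_ofFrobenius_succ (hra : Antitone r) (hc : Antitone c) (hcd : ∀ l, d ≤ c l)
    (k : Fin d) : rowLen (ofFrobenius r c hr hN) (k + 1) = r k := by
  refine eq_of_forall_lt_iff fun j => ?_
  rw [Nat.Partition.lt_rowLen_iff]
  rcases lt_or_ge j d with hj | hj
  · rw [colLen_ofFrobenius_succ hr hN hc hcd ⟨j, hj⟩]
    exact iff_of_true (k.isLt.trans_le (hcd _)) (hj.trans_le (hr k))
  · rw [colLen_ofFrobenius_succ_of_le hr hN hj, hra.lt_card_filter_lt_iff]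

theorem durfee_ofFrobenius (hra : Antitone r) (hc : Antitone c) (hcd : ∀ l, d ≤ c l) :
    durfee (ofFrobenius r c hr hN) = d := by
  have hlow : rowLen (ofFrobenius r c hr hN) (d + 1) ≤ d := by
    by_contra! h
    rw [Nat.Partition.lt_rowLen_iff, colLen_ofFrobenius_succ_of_le hr hN le_rfl] at h
    exact h.not_ge ((card_filter_le _ _).trans (by simp))
  refine eq_of_forall_lt_iff fun j => ?_
  rw [Nat.Partition.lt_durfee_iff]
  rcases lt_or_ge j d with hj | hj
  · rw [show j + 1 = (⟨j, hj⟩ : Fin d) + 1 from rfl, rowLen_ofFrobenius_succ hr hN hra hc hcd]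
    exact iff_of_true ((hj.trans_le (hr _))) hj
  · exact iff_of_false
      (fun h => h.not_ge ((Nat.Partition.rowLen_antitone _ (by omega)).trans (hlow.trans hj)))
      hj.not_gt

end Frobenius

theorem Nat.Partition.parts_eq_frobeniusParts {N : ℕ} (p : Nat.Partition N) {d : ℕ}
    (hd : durfee p = d) :
    p.parts = frobeniusParts (fun l : Fin d => rowLen p (l + 1)) (fun l => colLen p (l + 1)) := by
  subst hd
  have hra : Antitone fun l : Fin (durfee p) => rowLen p (l + 1) := fun i j hij =>
    p.rowLen_antitone (Nat.add_le_add_right (Fin.le_def.mp hij) 1)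
  have hca : Antitone fun l : Fin (durfee p) => colLen p (l + 1) := fun i j hij =>
    p.colLen_antitone (Nat.add_le_add_right (Fin.le_def.mp hij) 1)
  have hrd : ∀ l : Fin (durfee p), durfee p ≤ rowLen p (l + 1) := fun l =>
    p.durfee_le_rowLen l.isLt
  have hcd : ∀ l : Fin (durfee p), durfee p ≤ colLen p (l + 1) := fun l =>
    p.durfee_le_colLen l.isLt
  refine p.parts_eq_of_colLen_eq (ofFrobenius _ _ hrd rfl) fun v => ?_
  rcases lt_or_ge v (durfee p) with hv | hv
  · exact (colLen_ofFrobenius_succ hrd rfl hca hcd ⟨v, hv⟩).symm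
  · rw [p.colLen_eq_card_of_durfee_le hv, colLen_ofFrobenius_succ_of_le hrd rfl hv]

section Excess

variable {d : ℕ}

def durfeeExcess {N : ℕ} (p : Nat.Partition N) (d : ℕ) (l : Fin d) : ℕ :=
  rowLen p (l + 1) + colLen p (l + 1) - (2 * d + 1)

def excessParts (a : Fin d → ℕ) : Multiset ℕ :=
  frobeniusParts (fun l => d + 1 + (a l + 1) / 2) (fun l => d + a l / 2)

theorem sum_excessParts (a : Fin d → ℕ) : (excessParts a).sum = d * (d + 1) + ∑ l, a l := by
  rw [excessParts, sum_frobeniusParts]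
  calc ∑ l, (d + 1 + (a l + 1) / 2 + (d + a l / 2 - d)) = ∑ l : Fin d, ((d + 1) + a l) :=
        sum_congr rfl fun l _ => by omega
    _ = d * (d + 1) + ∑ l, a l := by simp [sum_add_distrib]

def ofExcess {N : ℕ} (a : Fin d → ℕ) (hN : N = d * (d + 1) + ∑ l, a l) : Nat.Partition N :=
  ofFrobenius (fun l => d + 1 + (a l + 1) / 2) (fun l => d + a l / 2) (fun l => by omega)
    ((sum_excessParts a).trans hN.symm)

variable {N : ℕ} {a : Fin d → ℕ} (hN : N = d * (d + 1) + ∑ l, a l)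

theorem le_of_mem_ofExcess_parts {B : ℕ} (haB : ∀ l, a l ≤ B) {x : ℕ}
    (hx : x ∈ (ofExcess a hN).parts) : x ≤ max (d + 1 + (B + 1) / 2) d := by
  rcases mem_frobeniusParts hx with ⟨l, rfl⟩ | hx
  · have := haB l
    exact le_max_of_le_left (by omega)
  · exact le_max_of_le_right hx

theorem card_ofExcess_parts_le {B : ℕ} (haB : ∀ l, a l ≤ B) :
    Multiset.card (ofExcess a hN).parts ≤ d + B / 2 := by
  change Multiset.card (frobeniusParts _ _) ≤ _
  rw [card_frobeniusParts]
  exact Nat.add_le_add_left (Finset.sup_le fun l _ => by have := haB l; omega) d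

theorem rowLen_ofExcess_succ (ha : Antitone a) (l : Fin d) :
    rowLen (ofExcess a hN) (l + 1) = d + 1 + (a l + 1) / 2 :=
  rowLen_ofFrobenius_succ _ _ (fun i j hij => by have := ha hij; omega)
    (fun i j hij => by have := ha hij; omega) (fun _ => by omega) l

theorem colLen_ofExcess_succ (ha : Antitone a) (l : Fin d) :
    colLen (ofExcess a hN) (l + 1) = d + a l / 2 :=
  colLen_ofFrobenius_succ _ _ (fun i j hij => by have := ha hij; omega) (fun _ => by omega) l

theorem durfee_ofExcess (ha : Antitone a) : durfee (ofExcess a hN) = d :=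
  durfee_ofFrobenius _ _ (fun i j hij => by have := ha hij; omega)
    (fun i j hij => by have := ha hij; omega) (fun _ => by omega)

theorem srank_ofExcess_succ (ha : Antitone a) (l : Fin d) :
    srank (ofExcess a hN) (l + 1) = 1 + (a l % 2 : ℕ) := by
  rw [srank, rowLen_ofExcess_succ hN ha, colLen_ofExcess_succ hN ha]
  omega

theorem srank_ofExcess_eq_one_or_two (ha : Antitone a) {l : ℕ} (hl₁ : 1 ≤ l) (hl₂ : l ≤ d) :
    srank (ofExcess a hN) l = 1 ∨ srank (ofExcess a hN) l = 2 := by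
  obtain ⟨k, rfl⟩ : ∃ k : Fin d, l = k + 1 := ⟨⟨l - 1, by omega⟩, by simp; omega⟩
  rw [srank_ofExcess_succ hN ha]
  omega

theorem durfeeExcess_ofExcess (ha : Antitone a) : durfeeExcess (ofExcess a hN) d = a := by
  funext l
  rw [durfeeExcess, rowLen_ofExcess_succ hN ha, colLen_ofExcess_succ hN ha]
  omega

end Excess

section DurfeeExcess

variable {N : ℕ} (p : Nat.Partition N)

theorem durfeeExcess_antitone (d : ℕ) : Antitone (durfeeExcess p d) := fun i j hij => by
  have hr := p.rowLen_antitone (Nat.add_le_add_right (Fin.le_def.mp hij) 1)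
  have hc := p.colLen_antitone (Nat.add_le_add_right (Fin.le_def.mp hij) 1)
  simp only [durfeeExcess]
  omega

theorem durfeeExcess_le {B : ℕ} (hB : ∀ x ∈ p.parts, x ≤ B) (d : ℕ) (l : Fin d) :
    durfeeExcess p d l ≤ B + Multiset.card p.parts - (2 * d + 1) := by
  have := p.rowLen_le_of_forall_le hB l
  have := p.colLen_le_card (l + 1)
  simp only [durfeeExcess]
  omega

theorem parts_eq_excessParts_durfeeExcess {d : ℕ} (hd : durfee p = d)
    (hrank : ∀ l : Fin d, srank p (l + 1) = 1 ∨ srank p (l + 1) = 2) :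
    p.parts = excessParts (durfeeExcess p d) := by
  subst hd
  rw [p.parts_eq_frobeniusParts rfl, excessParts]
  congr 1 <;> funext l <;> have := hrank l <;> have := p.durfee_le_colLen l.isLt <;>
    simp only [srank, durfeeExcess] at * <;> omega

end DurfeeExcess

/-- Case `k = 2, i = 1` of the main bijection: partitions
`N = n₁(n₁+1) + a₁ + ⋯ + a_{n₁}` with `n - 2n₁ - 1 ≥ a₁ ≥ ⋯ ≥ a_{n₁} ≥ 0` are
equinumerous with partitions of `N` in a `⌊(n+2)/2⌋ × ⌊(n-1)/2⌋` box with exactly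
`n₁` diagonal hooks and all successive ranks equal to `1` or `2`. -/
theorem bijection_Q41 (n n₁ N : ℕ) (h : 2 * n₁ ≤ n - 1) :
    Nat.card {a : Fin n₁ → ℕ //
        Antitone a ∧ (∀ p, a p ≤ n - 2 * n₁ - 1) ∧ N = n₁ * (n₁ + 1) + ∑ p, a p} =
      Nat.card {p : Nat.Partition N //
        (∀ x ∈ p.parts, x ≤ (n + 2) / 2) ∧ Multiset.card p.parts ≤ (n - 1) / 2 ∧
        durfee p = n₁ ∧
        ∀ l, 1 ≤ l → l ≤ n₁ → srank p l = 1 ∨ srank p l = 2} := by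
  have hmem (a : Fin n₁ → ℕ) (ha : Antitone a) (haB : ∀ l, a l ≤ n - 2 * n₁ - 1)
      (hN : N = n₁ * (n₁ + 1) + ∑ l, a l) :
      (∀ x ∈ (ofExcess a hN).parts, x ≤ (n + 2) / 2) ∧
        Multiset.card (ofExcess a hN).parts ≤ (n - 1) / 2 ∧ durfee (ofExcess a hN) = n₁ ∧
        ∀ l, 1 ≤ l → l ≤ n₁ → srank (ofExcess a hN) l = 1 ∨ srank (ofExcess a hN) l = 2 :=
    ⟨fun x hx => by have := le_of_mem_ofExcess_parts hN haB hx; omega,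
      by have := card_ofExcess_parts_le hN haB; omega, durfee_ofExcess hN ha,
      fun _ hl₁ hl₂ => srank_ofExcess_eq_one_or_two hN ha hl₁ hl₂⟩
  refine Nat.card_eq_of_bijective
    (fun a => ⟨ofExcess a.1 a.2.2.2, hmem a.1 a.2.1 a.2.2.1 a.2.2.2⟩) ⟨?_, ?_⟩
  · rintro ⟨a, ha, _, hN⟩ ⟨b, hb, _, hN'⟩ hab
    have := congrArg (durfeeExcess · n₁) (congrArg Subtype.val hab)
    simp only [durfeeExcess_ofExcess hN ha, durfeeExcess_ofExcess hN' hb] at this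
    exact Subtype.ext this
  · rintro ⟨p, hbox, hcard, hd, hrank⟩
    have hparts :=
      parts_eq_excessParts_durfeeExcess p hd fun l => hrank (l + 1) (by omega) (by omega)
    have hN : N = n₁ * (n₁ + 1) + ∑ l, durfeeExcess p n₁ l := by
      rw [← sum_excessParts, ← hparts, p.parts_sum]
    refine ⟨⟨durfeeExcess p n₁, durfeeExcess_antitone p n₁, fun l => ?_, hN⟩,
      Subtype.ext (Nat.Partition.ext hparts.symm)⟩
    have := durfeeExcess_le p hbox n₁ l
    omega
end
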